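/- Suppose f : {0,1}^n → {0,1} has the same number of alternations along every maximal chain (every chain of length n+1 from 0^n to 1^n). Then the alternation decomposition of f with the implication property is unique: if f_1 ⇒ f_2 ⇒ ... ⇒ f_k and f'_1 ⇒ f'_2 ⇒ ... ⇒ f'_k are two sequences of monotone functions with k = alt(f), f = f_1 ⊕ ... ⊕ f_k = f'_1 ⊕ ... ⊕ f'_k, then f_i = f'_i for all i. -/

import Mathlib

def altGe {n : ℕ} (f : (Fin n → Bool) → Bool) (k : ℕ) : Prop :=
  ∃ x : Fin (k + 1) → (Fin n → Bool), StrictMono x ∧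
    ∀ i : Fin k, f (x i.castSucc) ≠ f (x i.succ)

/-- `alt f` is the maximum number of value changes of `f` along any chain. -/
noncomputable def alt {n : ℕ} (f : (Fin n → Bool) → Bool) : ℕ :=
  sSup {k | altGe f k}

def xorFold (l : List Bool) : Bool := l.foldr Bool.xor false

/-- Number of alternations of f along the chain c. -/
def altCount {n : ℕ} (f : (Fin n → Bool) → Bool) (c : Fin (n + 1) → (Fin n → Bool)) : ℕ :=
  (Finset.univ.filter fun i : Fin n => f (c i.castSucc) ≠ f (c i.succ)).card

/-- A maximal chain in the Boolean hypercube: from 0^n to 1^n, of length n+1. -/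
def IsMaximalChain {n : ℕ} (c : Fin (n + 1) → (Fin n → Bool)) : Prop :=
  StrictMono c ∧ c 0 = (fun _ => false) ∧ c (Fin.last n) = (fun _ => true)

open Finset

section Aux

lemma xorFold_ofFn {k : ℕ} (g : Fin k → Bool) :
    xorFold (List.ofFn g)
      = decide (Odd (Finset.univ.filter fun i => g i = true).card) := by
  unfold xorFold
  induction k with
  | zero => simp
  | succ k ih =>
    rw [List.ofFn_succ]
    have : (Finset.univ.filter fun i : Fin (k+1) => g i = true).card
        = (if g 0 = true then 1 else 0)
          + (Finset.univ.filter fun i : Fin k => g i.succ = true).card := by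
      rw [Finset.card_filter, Finset.card_filter, Fin.sum_univ_succ]
    rw [this]
    cases hg : g 0 <;>
      simp [List.foldr_cons, hg, ih, Nat.odd_iff, Nat.add_mod] <;>
      rcases Nat.mod_two_eq_zero_or_one
        ((Finset.univ.filter fun i : Fin k => g i.succ = true).card) with h | h <;>
      simp [h]

lemma downset_mem_iff {m : ℕ} (S : Finset (Fin m))
    (hS : ∀ a b : Fin m, a ≤ b → b ∈ S → a ∈ S) (t : Fin m) :
    t ∈ S ↔ (t : ℕ) < S.card := by
  constructor
  · intro ht
    have hsub : Finset.Iic t ⊆ S := fun a ha => hS a t (Finset.mem_Iic.mp ha) ht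
    have := Finset.card_le_card hsub
    rw [Fin.card_Iic] at this; omega
  · intro ht
    by_contra h
    have hsub : S ⊆ Finset.Iio t := by
      intro a ha
      rw [Finset.mem_Iio]
      rcases lt_or_ge a t with h1 | h1
      · exact h1
      · exact absurd (hS t a h1 ha) h
    have := Finset.card_le_card hsub
    rw [Fin.card_Iio] at this; omega

lemma upset_mem_iff {m : ℕ} (S : Finset (Fin m))
    (hS : ∀ a b : Fin m, a ≤ b → a ∈ S → b ∈ S) (t : Fin m) :
    t ∈ S ↔ m ≤ (t : ℕ) + S.card := by
  constructor
  · intro ht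
    have hsub : Finset.Ici t ⊆ S := fun a ha => hS t a (Finset.mem_Ici.mp ha) ht
    have := Finset.card_le_card hsub
    rw [Fin.card_Ici] at this
    have := t.isLt; omega
  · intro ht
    by_contra h
    have hsub : S ⊆ Finset.Ioi t := by
      intro a ha
      rw [Finset.mem_Ioi]
      rcases lt_or_ge t a with h1 | h1
      · exact h1
      · exact absurd (hS a t h1 ha) h
    have := Finset.card_le_card hsub
    rw [Fin.card_Ioi] at this
    have := t.isLt; omega

lemma strictMono_last_ge :
    ∀ (K : ℕ) (g : Fin (K + 1) → ℕ), StrictMono g → K + g 0 ≤ g (Fin.last K) := by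
  intro K
  induction K with
  | zero => intro g _; simp [Fin.last]
  | succ K ih =>
    intro g hg
    have h1 := ih (g ∘ Fin.castSucc) (hg.comp Fin.strictMono_castSucc)
    have h2 : g (Fin.last K).castSucc < g (Fin.last (K+1)) := hg (by
      rw [Fin.lt_def]; simp [Fin.last])
    simp only [Function.comp] at h1
    have : (0 : Fin (K+1)).castSucc = (0 : Fin (K+2)) := rfl
    rw [this] at h1
    omega

/-- the weight (number of true coordinates) is strictly monotone -/
lemma wt_strict {n : ℕ} {y z : Fin n → Bool} (h : y < z) :
    (Finset.univ.filter fun i => y i = true).card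
      < (Finset.univ.filter fun i => z i = true).card := by
  obtain ⟨hle, i, hi⟩ := Pi.lt_def.mp h
  obtain ⟨hyi, hzi⟩ := Bool.lt_iff.mp hi
  apply Finset.card_lt_card
  rw [Finset.ssubset_iff_of_subset (fun j hj => by
    simp only [mem_filter, mem_univ, true_and] at *
    exact Bool.le_iff_imp.mp (hle j) hj)]
  exact ⟨i, by simp [hzi], by simp [hyi]⟩

lemma chain_through {n K : ℕ} (x : Fin (K + 1) → (Fin n → Bool)) (hx : Monotone x) :
    ∃ c : Fin (n + 1) → (Fin n → Bool), IsMaximalChain c ∧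
      ∃ w : Fin (K + 1) → Fin (n + 1), Monotone w ∧ ∀ t, c (w t) = x t := by
  classical
  set thr : Fin n → ℕ := fun i => (univ.filter fun t : Fin (K+1) => x t i = false).card
    with hthr_def
  have hthr : ∀ (t : Fin (K+1)) (i : Fin n), x t i = true ↔ thr i ≤ (t : ℕ) := by
    intro t i
    have hdown := downset_mem_iff (univ.filter fun t : Fin (K+1) => x t i = false)
      (fun a b hab hb => by
        simp only [mem_filter, mem_univ, true_and] at *
        have h1 : x a i ≤ x b i := hx hab i
        rw [hb] at h1
        exact le_antisymm h1 (Bool.false_le _)) t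
    simp only [mem_filter, mem_univ, true_and] at hdown
    cases hxt : x t i <;> simp [hxt, hthr_def] at hdown ⊢ <;> omega
  set R : Fin n → Fin n → Prop := fun a b => thr a < thr b ∨ (thr a = thr b ∧ a < b) with hR_def
  have hRdec : DecidableRel R := fun a b => by rw [hR_def]; infer_instance
  set rank : Fin n → ℕ := fun i => (univ.filter fun i' => R i' i).card with hrank_def
  have hRirrefl : ∀ i, ¬ R i i := by
    intro i h
    rcases h with h | ⟨_, h⟩ <;> exact absurd h (lt_irrefl _)
  have hRtrans : ∀ a b c, R a b → R b c → R a c := by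
    intro a b c h1 h2
    rcases h1 with h1 | ⟨h1, h1'⟩ <;> rcases h2 with h2 | ⟨h2, h2'⟩
    · left; omega
    · left; omega
    · left; omega
    · exact Or.inr ⟨by omega, lt_trans h1' h2'⟩
  have hrank_lt : ∀ i, rank i < n := by
    intro i
    have hsub : (univ.filter fun i' => R i' i) ⊆ univ.erase i := by
      intro j hj
      simp only [mem_filter, mem_univ, true_and] at hj
      refine Finset.mem_erase.mpr ⟨fun hji => hRirrefl i (hji ▸ hj), mem_univ j⟩
    have h1 := Finset.card_le_card hsub
    rw [Finset.card_erase_of_mem (mem_univ i), Finset.card_univ, Fintype.card_fin] at h1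
    have := i.isLt
    simp only [hrank_def]
    omega
  have hrank_strict : ∀ a b, R a b → rank a < rank b := by
    intro a b hab
    apply Finset.card_lt_card
    rw [Finset.ssubset_iff_of_subset (fun j hj => by
      simp only [mem_filter, mem_univ, true_and] at *
      exact hRtrans j a b hj hab)]
    exact ⟨a, by simp only [mem_filter, mem_univ, true_and]; exact hab,
      by simp only [mem_filter, mem_univ, true_and]; exact hRirrefl a⟩
  have hrank_surj : ∀ j : ℕ, j < n → ∃ i, rank i = j := by
    intro j hj
    have hinj : Function.Injective (fun i => (⟨rank i, hrank_lt i⟩ : Fin n)) := by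
      intro a b hab
      simp only [Fin.mk.injEq] at hab
      by_contra hne
      rcases lt_trichotomy a b with h | h | h
      · rcases lt_trichotomy (thr a) (thr b) with h' | h' | h'
        · exact absurd hab (Nat.ne_of_lt (hrank_strict a b (Or.inl h')))
        · exact absurd hab (Nat.ne_of_lt (hrank_strict a b (Or.inr ⟨h', h⟩)))
        · exact absurd hab.symm (Nat.ne_of_lt (hrank_strict b a (Or.inl h')))
      · exact hne h
      · rcases lt_trichotomy (thr a) (thr b) with h' | h' | h'
        · exact absurd hab (Nat.ne_of_lt (hrank_strict a b (Or.inl h')))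
        · exact absurd hab.symm (Nat.ne_of_lt (hrank_strict b a (Or.inr ⟨h'.symm, h⟩)))
        · exact absurd hab.symm (Nat.ne_of_lt (hrank_strict b a (Or.inl h')))
    have hsurj := Finite.injective_iff_surjective.mp hinj
    obtain ⟨i, hi⟩ := hsurj ⟨j, hj⟩
    exact ⟨i, by simpa [Fin.ext_iff] using hi⟩
  refine ⟨fun j i => decide (rank i < (j : ℕ)), ⟨?_, ?_, ?_⟩, ?_⟩
  · intro j j' hjj'
    have hle : (fun i => decide (rank i < (j : ℕ))) ≤ (fun i => decide (rank i < (j' : ℕ))) := by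
      intro i
      by_cases h : rank i < (j : ℕ)
      · simp [h, lt_of_lt_of_le h (le_of_lt hjj')]
      · simp [h]
    refine lt_of_le_of_ne hle ?_
    have hjn : (j : ℕ) < n := by
      have h1 : (j : ℕ) < (j' : ℕ) := hjj'
      have h2 := j'.isLt
      omega
    obtain ⟨i, hi⟩ := hrank_surj (j : ℕ) hjn
    intro hcontra
    have h2 := congrFun hcontra i
    simp only at h2
    rw [hi] at h2
    have h3 : (j : ℕ) < (j' : ℕ) := hjj'
    simp [h3] at h2
  · funext i; simp
  · funext i; simp [Fin.last, hrank_lt i]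
  · refine ⟨fun t => ⟨(univ.filter fun i => thr i ≤ (t : ℕ)).card, ?_⟩, ?_, ?_⟩
    · have := Finset.card_filter_le (univ : Finset (Fin n)) (fun i => thr i ≤ (t : ℕ))
      rw [Finset.card_univ, Fintype.card_fin] at this
      omega
    · intro t t' htt'
      simp only [Fin.mk_le_mk]
      apply Finset.card_le_card
      intro i hi
      simp only [mem_filter, mem_univ, true_and] at *
      exact le_trans hi htt'
    · intro t
      funext i
      simp only
      have key : rank i < (univ.filter fun i' => thr i' ≤ (t : ℕ)).card ↔ thr i ≤ (t : ℕ) := by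
        constructor
        · intro h
          by_contra hc
          push_neg at hc
          have hsub : (univ.filter fun i' => thr i' ≤ (t : ℕ))
              ⊆ (univ.filter fun i' => R i' i) := by
            intro j hj
            simp only [mem_filter, mem_univ, true_and] at *
            exact Or.inl (lt_of_le_of_lt hj hc)
          have := Finset.card_le_card hsub
          simp only [hrank_def] at h
          omega
        · intro h
          apply Finset.card_lt_card
          rw [Finset.ssubset_iff_of_subset (fun j hj => by
            simp only [mem_filter, mem_univ, true_and] at *
            rcases hj with hj | ⟨hj, _⟩
            · omega
            · omega)]
          exact ⟨i, by simp only [mem_filter, mem_univ, true_and]; exact h,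
            by simp only [mem_filter, mem_univ, true_and]; exact hRirrefl i⟩
      cases hxt : x t i
      · have : ¬ thr i ≤ (t : ℕ) := fun h => by rw [(hthr t i).mpr h] at hxt; cases hxt
        simp only [decide_eq_false_iff_not]
        rw [key]; exact this
      · simp only [decide_eq_true_eq]
        rw [key]; exact (hthr t i).mp hxt

/-- Number of alternations among the first t steps of the chain. -/
def nalt {n : ℕ} (f : (Fin n → Bool) → Bool) (c : Fin (n + 1) → (Fin n → Bool)) (t : ℕ) : ℕ :=
  (Finset.univ.filter fun i : Fin n => (i : ℕ) < t ∧ f (c i.castSucc) ≠ f (c i.succ)).card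

lemma nalt_zero {n : ℕ} (f : (Fin n → Bool) → Bool) (c : Fin (n + 1) → (Fin n → Bool)) :
    nalt f c 0 = 0 := by
  simp [nalt]

lemma nalt_mono {n : ℕ} (f : (Fin n → Bool) → Bool) (c : Fin (n + 1) → (Fin n → Bool))
    {t t' : ℕ} (h : t ≤ t') : nalt f c t ≤ nalt f c t' := by
  apply Finset.card_le_card
  intro i hi
  simp only [nalt, mem_filter, mem_univ, true_and] at *
  exact ⟨lt_of_lt_of_le hi.1 h, hi.2⟩

lemma nalt_n {n : ℕ} (f : (Fin n → Bool) → Bool) (c : Fin (n + 1) → (Fin n → Bool)) :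
    nalt f c n = altCount f c := by
  unfold nalt altCount
  congr 1
  apply Finset.filter_congr
  intro i _
  simp [i.isLt]

lemma nalt_succ {n : ℕ} (f : (Fin n → Bool) → Bool) (c : Fin (n + 1) → (Fin n → Bool))
    (t : ℕ) (ht : t < n) :
    nalt f c (t + 1) = nalt f c t +
      if f (c (⟨t, ht⟩ : Fin n).castSucc) ≠ f (c (⟨t, ht⟩ : Fin n).succ) then 1 else 0 := by
  unfold nalt
  by_cases hc : f (c (⟨t, ht⟩ : Fin n).castSucc) ≠ f (c (⟨t, ht⟩ : Fin n).succ)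
  · rw [if_pos hc]
    have : (Finset.univ.filter fun i : Fin n => (i : ℕ) < t + 1 ∧ f (c i.castSucc) ≠ f (c i.succ))
        = insert (⟨t, ht⟩ : Fin n)
          (Finset.univ.filter fun i : Fin n => (i : ℕ) < t ∧ f (c i.castSucc) ≠ f (c i.succ)) := by
      ext j
      simp only [mem_filter, mem_univ, true_and, Finset.mem_insert, Fin.ext_iff]
      constructor
      · rintro ⟨hj1, hj2⟩
        rcases Nat.lt_succ_iff_lt_or_eq.mp hj1 with h | h
        · exact Or.inr ⟨h, hj2⟩
        · exact Or.inl h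
      · rintro (h | ⟨h1, h2⟩)
        · have : j = (⟨t, ht⟩ : Fin n) := Fin.ext h
          subst this
          exact ⟨by omega, hc⟩
        · exact ⟨by omega, h2⟩
    rw [this, Finset.card_insert_of_notMem (by simp)]
  · rw [if_neg hc]
    push_neg at hc
    have : (Finset.univ.filter fun i : Fin n => (i : ℕ) < t + 1 ∧ f (c i.castSucc) ≠ f (c i.succ))
        = (Finset.univ.filter fun i : Fin n => (i : ℕ) < t ∧ f (c i.castSucc) ≠ f (c i.succ)) := by
      ext j
      simp only [mem_filter, mem_univ, true_and]
      constructor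
      · rintro ⟨hj1, hj2⟩
        rcases Nat.lt_succ_iff_lt_or_eq.mp hj1 with h | h
        · exact ⟨h, hj2⟩
        · exact absurd hj2 (by have h4 : j = (⟨t, ht⟩ : Fin n) := Fin.ext h; rw [h4]; simpa using hc)
      · rintro ⟨h1, h2⟩
        exact ⟨by omega, h2⟩
    rw [this]
    omega

lemma parity_along_chain {n : ℕ} (f : (Fin n → Bool) → Bool) (c : Fin (n + 1) → (Fin n → Bool))
    (hmc : IsMaximalChain c) (h0 : f (fun _ => false) = false) :
    ∀ t (ht : t ≤ n), f (c ⟨t, by omega⟩) = decide (Odd (nalt f c t)) := by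
  intro t
  induction t with
  | zero =>
    intro _
    have : (⟨0, by omega⟩ : Fin (n + 1)) = 0 := by ext; simp
    rw [this, hmc.2.1, h0, nalt_zero]
    simp
  | succ t ih =>
    intro ht
    have ht' : t < n := by omega
    have iht := ih (by omega)
    rw [nalt_succ f c t ht']
    have hcs : (⟨t, ht'⟩ : Fin n).castSucc = (⟨t, by omega⟩ : Fin (n+1)) := by
      simp [Fin.castSucc, Fin.ext_iff]
    have hsc : (⟨t, ht'⟩ : Fin n).succ = (⟨t + 1, by omega⟩ : Fin (n+1)) := by
      simp [Fin.succ, Fin.ext_iff]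
    by_cases hch : f (c (⟨t, ht'⟩ : Fin n).castSucc) ≠ f (c (⟨t, ht'⟩ : Fin n).succ)
    · rw [if_pos hch]
      rw [hcs, hsc] at hch
      rw [iht] at hch
      have : f (c ⟨t + 1, by omega⟩) = !(decide (Odd (nalt f c t))) := by
        cases h : f (c ⟨t + 1, by omega⟩)
        · simp only [h] at hch
          cases hd : decide (Odd (nalt f c t)) <;> simp [hd] at hch ⊢
        · simp only [h] at hch
          cases hd : decide (Odd (nalt f c t)) <;> simp [hd] at hch ⊢
      rw [this]
      simp only [Nat.odd_add_one, Nat.odd_iff, Nat.even_iff, decide_not]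
    · rw [if_neg hch]
      push_neg at hch
      rw [hcs, hsc] at hch
      simp only [Nat.add_zero]
      rw [← hch, iht]

section counting
variable {n k : ℕ} (f : (Fin n → Bool) → Bool) (c : Fin (n + 1) → (Fin n → Bool))
  (m : (Fin n → Bool) → ℕ)

lemma telescope (hc : StrictMono c) (hmono : Monotone m) :
    ∀ t, (ht : t ≤ n) → m (c ⟨t, by omega⟩) = m (c 0) +
      ∑ i ∈ univ.filter (fun i : Fin n => (i : ℕ) < t), (m (c i.succ) - m (c i.castSucc)) := by
  intro t
  induction t with
  | zero =>
    intro _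
    have h1 : (⟨0, by omega⟩ : Fin (n + 1)) = 0 := by ext; simp
    have h2 : (univ.filter fun i : Fin n => (i : ℕ) < 0) = ∅ := by
      ext i; simp
    rw [h1, h2]
    simp
  | succ t ih =>
    intro ht
    have ht' : t < n := by omega
    have iht := ih (by omega)
    have hcs : (⟨t, ht'⟩ : Fin n).castSucc = (⟨t, by omega⟩ : Fin (n+1)) := by
      simp [Fin.castSucc, Fin.ext_iff]
    have hsc : (⟨t, ht'⟩ : Fin n).succ = (⟨t + 1, by omega⟩ : Fin (n+1)) := by
      simp [Fin.succ, Fin.ext_iff]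
    have hfil : (univ.filter fun i : Fin n => (i : ℕ) < t + 1)
        = insert (⟨t, ht'⟩ : Fin n) (univ.filter fun i : Fin n => (i : ℕ) < t) := by
      ext j
      simp only [mem_filter, mem_univ, true_and, Finset.mem_insert, Fin.ext_iff]
      omega
    rw [hfil, Finset.sum_insert (by simp)]
    have hle : m (c (⟨t, ht'⟩ : Fin n).castSucc) ≤ m (c (⟨t, ht'⟩ : Fin n).succ) :=
      hmono (le_of_lt (hc Fin.castSucc_lt_succ))
    rw [hcs, hsc] at hle ⊢
    omega

lemma step_lt (hc : StrictMono c) (hmono : Monotone m)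
    (hpar : ∀ x, f x = decide (Odd (m x))) (i : Fin n)
    (hch : f (c i.castSucc) ≠ f (c i.succ)) :
    m (c i.castSucc) < m (c i.succ) := by
  refine lt_of_le_of_ne (hmono (le_of_lt (hc Fin.castSucc_lt_succ))) ?_
  intro heq
  rw [hpar, hpar, heq] at hch
  exact hch rfl

lemma upper_bound (hc : StrictMono c) (hmono : Monotone m)
    (hpar : ∀ x, f x = decide (Odd (m x))) :
    altCount f c + m (c 0) ≤ m (c (Fin.last n)) := by
  classical
  set d : Fin n → ℕ := fun i => m (c i.succ) - m (c i.castSucc) with hd_def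
  have h1 : altCount f c
      ≤ ∑ i ∈ univ.filter (fun i : Fin n => f (c i.castSucc) ≠ f (c i.succ)), d i := by
    rw [altCount, Finset.card_eq_sum_ones]
    apply Finset.sum_le_sum
    intro i hi
    simp only [mem_filter, mem_univ, true_and] at hi
    have := step_lt f c m hc hmono hpar i hi
    simp only [hd_def]
    omega
  have h2 : ∑ i ∈ univ.filter (fun i : Fin n => f (c i.castSucc) ≠ f (c i.succ)), d i
      ≤ ∑ i, d i := Finset.sum_le_sum_of_subset (Finset.filter_subset _ _)
  have h3 := telescope c m hc hmono n (le_refl n)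
  have h4 : (univ.filter fun i : Fin n => (i : ℕ) < n) = univ := by
    apply Finset.filter_true_of_mem
    intro i _
    exact i.isLt
  rw [h4] at h3
  have h5 : (⟨n, by omega⟩ : Fin (n + 1)) = Fin.last n := rfl
  rw [h5] at h3
  have h3' : m (c (Fin.last n)) = m (c 0) + ∑ i, d i := h3
  omega

lemma exact_count (hc : IsMaximalChain c) (hmono : Monotone m)
    (hpar : ∀ x, f x = decide (Odd (m x))) (hle : ∀ x, m x ≤ k)
    (hcount : altCount f c = k) :
    ∀ t, (ht : t ≤ n) → m (c ⟨t, by omega⟩) = nalt f c t := by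
  classical
  set d : Fin n → ℕ := fun i => m (c i.succ) - m (c i.castSucc) with hd_def
  set T : Finset (Fin n) := univ.filter (fun i : Fin n => f (c i.castSucc) ≠ f (c i.succ))
    with hT_def
  have hub := upper_bound f c m hc.1 hmono hpar
  have hlast : m (c (Fin.last n)) ≤ k := hle _
  have hm0 : m (c 0) = 0 := by omega
  have h3 := telescope c m hc.1 hmono n (le_refl n)
  have h4 : (univ.filter fun i : Fin n => (i : ℕ) < n) = univ := by
    apply Finset.filter_true_of_mem
    intro i _
    exact i.isLt
  rw [h4] at h3
  have h5 : (⟨n, by omega⟩ : Fin (n + 1)) = Fin.last n := rfl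
  rw [h5, hm0] at h3
  have h3' : m (c (Fin.last n)) = 0 + ∑ i, d i := h3
  have hsum_univ : ∑ i, d i = k := by
    have h6 : ∑ i, d i ≤ k := by omega
    have h7 : k ≤ ∑ i ∈ T, d i := by
      rw [← hcount, altCount, ← hT_def, Finset.card_eq_sum_ones]
      apply Finset.sum_le_sum
      intro i hi
      simp only [hT_def, mem_filter, mem_univ, true_and] at hi
      have := step_lt f c m hc.1 hmono hpar i hi
      simp only [hd_def]
      omega
    have h8 : ∑ i ∈ T, d i ≤ ∑ i, d i := Finset.sum_le_sum_of_subset (Finset.filter_subset _ _)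
    omega
  have hTcard : T.card = k := hcount
  have hTd : ∀ i ∈ T, d i = 1 := by
    have hle1 : ∀ i ∈ T, 1 ≤ d i := by
      intro i hi
      simp only [hT_def, mem_filter, mem_univ, true_and] at hi
      have := step_lt f c m hc.1 hmono hpar i hi
      simp only [hd_def]
      omega
    have h8 : ∑ i ∈ T, d i ≤ ∑ i, d i := Finset.sum_le_sum_of_subset (Finset.filter_subset _ _)
    have h7 : k ≤ ∑ i ∈ T, d i := by
      calc k = T.card := hTcard.symm
      _ = ∑ _i ∈ T, 1 := by rw [Finset.card_eq_sum_ones]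
      _ ≤ ∑ i ∈ T, d i := Finset.sum_le_sum hle1
    have heq : ∑ _i ∈ T, (1 : ℕ) = ∑ i ∈ T, d i := by
      rw [← Finset.card_eq_sum_ones]
      omega
    intro i hi
    exact ((Finset.sum_eq_sum_iff_of_le hle1).mp heq i hi).symm
  have hTd0 : ∀ i ∈ univ.filter (fun i : Fin n => ¬ (f (c i.castSucc) ≠ f (c i.succ))),
      d i = 0 := by
    have hsplit := Finset.sum_filter_add_sum_filter_not univ
      (fun i : Fin n => f (c i.castSucc) ≠ f (c i.succ)) d
    have hTsum : ∑ i ∈ T, d i = k := by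
      have h7 : k ≤ ∑ i ∈ T, d i := by
        calc k = ∑ _i ∈ T, 1 := by rw [← Finset.card_eq_sum_ones, hTcard]
        _ ≤ ∑ i ∈ T, d i := Finset.sum_le_sum (fun i hi => by rw [hTd i hi])
      have h8 : ∑ i ∈ T, d i ≤ ∑ i, d i :=
        Finset.sum_le_sum_of_subset (Finset.filter_subset _ _)
      omega
    rw [← hT_def] at hsplit
    have : ∑ i ∈ univ.filter (fun i : Fin n => ¬ (f (c i.castSucc) ≠ f (c i.succ))), d i = 0 := by
      omega
    intro i hi
    exact Finset.sum_eq_zero_iff.mp this i hi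
  have hdval : ∀ i : Fin n, d i = if f (c i.castSucc) ≠ f (c i.succ) then 1 else 0 := by
    intro i
    by_cases h : f (c i.castSucc) ≠ f (c i.succ)
    · rw [if_pos h]
      exact hTd i (by simp [hT_def, h])
    · rw [if_neg h]
      exact hTd0 i (by simp only [mem_filter, mem_univ, true_and]; exact h)
  intro t ht
  rw [telescope c m hc.1 hmono t ht, hm0, Nat.zero_add]
  rw [nalt, Finset.card_filter]
  rw [Finset.sum_filter]
  apply Finset.sum_congr rfl
  intro i _
  have hdi : m (c i.succ) - m (c i.castSucc)
      = if f (c i.castSucc) ≠ f (c i.succ) then 1 else 0 := hdval i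
  rw [hdi]
  by_cases h1 : (i : ℕ) < t <;> by_cases h2 : f (c i.castSucc) ≠ f (c i.succ) <;> simp [h1, h2]

end counting

end Aux

/-- If f has the same number of alternations along every maximal chain, then the
alternation decomposition with the implication property is unique. -/
theorem unique_alternation_decomposition (n : ℕ) (f : (Fin n → Bool) → Bool)
    (h0 : f (fun _ => false) = false)
    (huniform : ∀ c c', IsMaximalChain c → IsMaximalChain c' →
      altCount f c = altCount f c')
    (fs fs' : Fin (alt f) → (Fin n → Bool) → Bool)
    (hm : ∀ i, Monotone (fs i)) (hm' : ∀ i, Monotone (fs' i))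
    (himp : ∀ i j : Fin (alt f), i ≤ j → ∀ x, fs i x = true → fs j x = true)
    (himp' : ∀ i j : Fin (alt f), i ≤ j → ∀ x, fs' i x = true → fs' j x = true)
    (hdec : ∀ x, f x = xorFold (List.ofFn fun i => fs i x))
    (hdec' : ∀ x, f x = xorFold (List.ofFn fun i => fs' i x)) :
    ∀ i x, fs i x = fs' i x := by
  classical
  set m : (Fin n → Bool) → ℕ := fun x => (univ.filter fun i => fs i x = true).card with hm_def
  set m' : (Fin n → Bool) → ℕ := fun x => (univ.filter fun i => fs' i x = true).card with hm'_def
  have hpar : ∀ x, f x = decide (Odd (m x)) := by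
    intro x
    rw [hdec x, xorFold_ofFn]
  have hpar' : ∀ x, f x = decide (Odd (m' x)) := by
    intro x
    rw [hdec' x, xorFold_ofFn]
  have hmono : Monotone m := by
    intro x y hxy
    apply Finset.card_le_card
    intro i hi
    simp only [mem_filter, mem_univ, true_and] at *
    exact Bool.le_iff_imp.mp (hm i hxy) hi
  have hmono' : Monotone m' := by
    intro x y hxy
    apply Finset.card_le_card
    intro i hi
    simp only [mem_filter, mem_univ, true_and] at *
    exact Bool.le_iff_imp.mp (hm' i hxy) hi
  have hmle : ∀ x, m x ≤ alt f := by
    intro x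
    have := Finset.card_filter_le (univ : Finset (Fin (alt f))) (fun i => fs i x = true)
    rwa [Finset.card_univ, Fintype.card_fin] at this
  have hmle' : ∀ x, m' x ≤ alt f := by
    intro x
    have := Finset.card_filter_le (univ : Finset (Fin (alt f))) (fun i => fs' i x = true)
    rwa [Finset.card_univ, Fintype.card_fin] at this
  -- alt f is attained
  have hmem : altGe f (alt f) := by
    have halt : alt f = sSup {k | altGe f k} := rfl
    rw [halt]
    show sSup {k | altGe f k} ∈ {k | altGe f k}
    apply Nat.sSup_mem
    · exact ⟨0, fun _ => fun _ => false, fun a b h => absurd (Fin.lt_def.mp h) (by omega),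
        fun i => i.elim0⟩
    · refine ⟨n, fun K hK => ?_⟩
      obtain ⟨x, hx, _⟩ := hK
      have hws : StrictMono (fun t => (univ.filter fun i => x t i = true).card) :=
        fun a b hab => wt_strict (hx hab)
      have h1 := strictMono_last_ge K _ hws
      have h2 : (univ.filter fun i => x (Fin.last K) i = true).card ≤ n := by
        have := Finset.card_filter_le (univ : Finset (Fin n))
          (fun i => x (Fin.last K) i = true)
        rwa [Finset.card_univ, Fintype.card_fin] at this
      omega
  -- construct a maximal chain through the witness
  obtain ⟨x, hx, hxalt⟩ := hmem
  obtain ⟨c₀, hc₀, w, hw, hcw⟩ := chain_through x hx.monotone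
  -- lower bound: altCount f c₀ ≥ alt f
  have hP := parity_along_chain f c₀ hc₀ h0
  have hnaltlt : ∀ s (hs : s < alt f),
      nalt f c₀ (w ⟨s, by omega⟩ : Fin (n+1)).1
        < nalt f c₀ (w ⟨s + 1, by omega⟩ : Fin (n+1)).1 := by
    intro s hs
    set i : Fin (alt f) := ⟨s, hs⟩ with hi_def
    have halt := hxalt i
    have e1 : c₀ (w i.castSucc) = c₀ ⟨(w i.castSucc : ℕ), by omega⟩ := rfl
    have e2 : c₀ (w i.succ) = c₀ ⟨(w i.succ : ℕ), by omega⟩ := rfl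
    rw [← hcw i.castSucc, ← hcw i.succ, e1, e2] at halt
    rw [hP (w i.castSucc : ℕ) (by omega), hP (w i.succ : ℕ) (by omega)] at halt
    have hne : nalt f c₀ (w i.castSucc : ℕ) ≠ nalt f c₀ (w i.succ : ℕ) := by
      intro heq
      rw [heq] at halt
      exact halt rfl
    have hle2 : nalt f c₀ (w i.castSucc : ℕ) ≤ nalt f c₀ (w i.succ : ℕ) :=
      nalt_mono f c₀ (by exact_mod_cast hw (le_of_lt (Fin.castSucc_lt_succ : i.castSucc < i.succ)))
    have hcs : i.castSucc = (⟨s, by omega⟩ : Fin (alt f + 1)) := rfl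
    have hsc : i.succ = (⟨s + 1, by omega⟩ : Fin (alt f + 1)) := rfl
    rw [hcs, hsc] at hne hle2
    omega
  have hlow : ∀ s, (hs : s ≤ alt f) → s ≤ nalt f c₀ (w ⟨s, by omega⟩ : Fin (n+1)).1 := by
    intro s
    induction s with
    | zero => intro _; omega
    | succ s ih =>
      intro hs
      have h1 := ih (by omega)
      have h2 := hnaltlt s (by omega)
      omega
  have hcount₀ : altCount f c₀ = alt f := by
    have h1 := hlow (alt f) (le_refl _)
    have h2 : nalt f c₀ (w ⟨alt f, by omega⟩ : Fin (n+1)).1 ≤ nalt f c₀ n :=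
      nalt_mono f c₀ (by omega)
    rw [nalt_n] at h2
    have h3 := upper_bound f c₀ m hc₀.1 hmono hpar
    have h4 := hmle (c₀ (Fin.last n))
    have h5 := hmle (c₀ 0)
    omega
  -- every maximal chain has exactly alt f alternations
  have hall : ∀ c, IsMaximalChain c → altCount f c = alt f := by
    intro c hc
    rw [huniform c c₀ hc hc₀, hcount₀]
  -- main step : m = m'
  have hmm' : ∀ x, m x = m' x := by
    intro y
    obtain ⟨c, hc, v, _, hcv⟩ := chain_through (fun _ : Fin 1 => y) monotone_const
    have hy : c (v 0) = y := hcv 0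
    have e1 : c (v 0) = c ⟨(v 0 : ℕ), by omega⟩ := rfl
    have h1 := exact_count f c m hc hmono hpar hmle (hall c hc) (v 0 : ℕ) (by omega)
    have h2 := exact_count f c m' hc hmono' hpar' hmle' (hall c hc) (v 0 : ℕ) (by omega)
    rw [← e1, hy] at h1 h2
    rw [h1, h2]
  -- conclude pointwise equality
  intro i x
  have hS := upset_mem_iff (univ.filter fun j => fs j x = true)
    (fun a b hab ha => by
      simp only [mem_filter, mem_univ, true_and] at *
      exact himp a b hab x ha) i
  have hS' := upset_mem_iff (univ.filter fun j => fs' j x = true)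
    (fun a b hab ha => by
      simp only [mem_filter, mem_univ, true_and] at *
      exact himp' a b hab x ha) i
  simp only [mem_filter, mem_univ, true_and] at hS hS'
  rw [Bool.eq_iff_iff, hS, hS']
  rw [show (univ.filter fun j => fs j x = true).card = m x from rfl,
    show (univ.filter fun j => fs' j x = true).card = m' x from rfl, hmm' x]
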